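/- For every horizon m ≥ 0, every μ ∈ ℝ and every n > 0, the Gaussian one-armed-bandit value function satisfies V_m(μ,n,γ,τ,λ) ≥ max(μ − λ, 0)/(1−γ). In particular, V_m(μ,n,γ,τ,λ) > 0 whenever λ < μ. -/

import Mathlib

/-! The posterior mean is a martingale: under the predictive law `𝒩(μ, 1/n + 1/τ)` the updated
mean `(nμ + τy)/(n + τ)` has expectation `μ`. Hence `(μ - λ)/(1 - γ)`, the value of pulling the
risky arm forever, is reproduced by one step of the recursion, and induction on the horizon gives
`V_m ≥ (μ - λ)/(1 - γ)`; together with `V_m ≥ 0` this is the claim. The analytic input is that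
`V_m` is integrable along the update, which follows from its measurability and linear growth. -/

open MeasureTheory ProbabilityTheory

/-- Finite-horizon value function of the Gaussian one-armed bandit:
`V γ τ m μ n λ`, with discount `γ`, observation precision `τ`, horizon `m`,
posterior state `(μ, n)` and safe-arm reward `λ`. The expectation over the
next observation is taken under the Gaussian predictive distribution
`𝒩(μ, 1/n + 1/τ)`. -/
noncomputable def V (γ τ : ℝ) : ℕ → ℝ → ℝ → ℝ → ℝ
  | 0, μ, _n, lam => max (μ - lam) 0 / (1 - γ)
  | m + 1, μ, n, lam =>
      max (μ - lam + γ * ∫ y, V γ τ m ((n * μ + τ * y) / (n + τ)) (n + τ) lam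
        ∂(gaussianReal μ (1 / n + 1 / τ).toNNReal)) 0

open Function
open scoped NNReal

noncomputable def posteriorMean (n τ μ y : ℝ) : ℝ := (n * μ + τ * y) / (n + τ)

lemma measurable_posteriorMean (n τ : ℝ) : Measurable (uncurry (posteriorMean n τ)) := by
  unfold posteriorMean uncurry
  fun_prop

lemma abs_posteriorMean_le {n τ : ℝ} (hn : 0 ≤ n) (hτ : 0 ≤ τ) (μ y : ℝ) :
    |posteriorMean n τ μ y| ≤ |μ| + |y| := by
  rw [posteriorMean, abs_div, abs_of_nonneg (add_nonneg hn hτ)]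
  refine div_le_of_le_mul₀ (add_nonneg hn hτ) (by positivity) ?_
  calc |n * μ + τ * y| ≤ n * |μ| + τ * |y| := by
        refine (abs_add_le _ _).trans ?_
        rw [abs_mul, abs_mul, abs_of_nonneg hn, abs_of_nonneg hτ]
    _ ≤ (|μ| + |y|) * (n + τ) := by nlinarith [abs_nonneg μ, abs_nonneg y]

section Gaussian

variable {μ : ℝ} {v : ℝ≥0}

lemma integrable_id_gaussianReal : Integrable (fun y : ℝ => y) (gaussianReal μ v) :=
  (memLp_id_gaussianReal 1).integrable le_rfl

lemma integral_abs_gaussianReal_le (μ : ℝ) (v : ℝ≥0) :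
    ∫ y, |y| ∂gaussianReal μ v ≤ |μ| + ∫ z, |z| ∂gaussianReal 0 v := by
  have hshift : gaussianReal μ v = (gaussianReal 0 v).map (· + μ) := by
    rw [gaussianReal_map_add_const, zero_add]
  have habs : Integrable (fun z : ℝ => |z|) (gaussianReal 0 v) := integrable_id_gaussianReal.abs
  rw [hshift, integral_map (by fun_prop) (by fun_prop)]
  calc ∫ z, |z + μ| ∂gaussianReal 0 v ≤ ∫ z, (|μ| + |z|) ∂gaussianReal 0 v :=
        integral_mono (integrable_id_gaussianReal.add (integrable_const μ)).abs
          ((integrable_const _).add habs)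
          fun z => (abs_add_le z μ).trans_eq (add_comm _ _)
    _ = |μ| + ∫ z, |z| ∂gaussianReal 0 v := by
        rw [integral_add (integrable_const _) habs, integral_const, probReal_univ, one_smul]

lemma measurable_integral_gaussianReal {f : ℝ → ℝ → ℝ} (hf : Measurable (uncurry f)) (v : ℝ≥0) :
    Measurable fun μ => ∫ y, f μ y ∂gaussianReal μ v := by
  let κ : Kernel ℝ ℝ :=
    ⟨fun μ => gaussianReal μ v,
      measurable_gaussianReal.comp (measurable_id.prodMk measurable_const)⟩
  have : IsMarkovKernel κ := ⟨fun _ => inferInstanceAs (IsProbabilityMeasure (gaussianReal _ v))⟩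
  exact (hf.stronglyMeasurable.integral_kernel_prod_right (κ := κ)).measurable

lemma integrable_posteriorMean_gaussianReal {n τ : ℝ} :
    Integrable (fun y => posteriorMean n τ μ y) (gaussianReal μ v) :=
  ((integrable_const _).add (integrable_id_gaussianReal.const_mul τ)).div_const _

lemma integral_posteriorMean_gaussianReal {n τ : ℝ} (hnτ : n + τ ≠ 0) :
    ∫ y, posteriorMean n τ μ y ∂gaussianReal μ v = μ := by
  simp only [posteriorMean]
  rw [integral_div, integral_add (integrable_const _) (integrable_id_gaussianReal.const_mul τ),
    integral_const, integral_const_mul, integral_id_gaussianReal, probReal_univ, one_smul]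
  field_simp

variable {f : ℝ → ℝ} {a b n τ : ℝ}

lemma integrable_comp_posteriorMean (hf : Measurable f) (hb : 0 ≤ b)
    (hfab : ∀ x, |f x| ≤ a + b * |x|) (hn : 0 ≤ n) (hτ : 0 ≤ τ) :
    Integrable (fun y => f (posteriorMean n τ μ y)) (gaussianReal μ v) := by
  refine ((integrable_const (a + b * |μ|)).add
    (integrable_id_gaussianReal.abs.const_mul b)).mono' ?_ (ae_of_all _ fun y => ?_)
  · exact (hf.comp (measurable_posteriorMean n τ).of_uncurry_left).aestronglyMeasurable
  · calc |f (posteriorMean n τ μ y)| ≤ a + b * |posteriorMean n τ μ y| := hfab _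
      _ ≤ a + b * |μ| + b * |y| := by nlinarith [abs_posteriorMean_le hn hτ μ y]

lemma integral_comp_posteriorMean_le (hf : Measurable f) (hb : 0 ≤ b)
    (hfab : ∀ x, |f x| ≤ a + b * |x|) (hn : 0 ≤ n) (hτ : 0 ≤ τ) :
    ∫ y, f (posteriorMean n τ μ y) ∂gaussianReal μ v
      ≤ a + b * (2 * |μ| + ∫ z, |z| ∂gaussianReal 0 v) := by
  have habs : Integrable (fun y : ℝ => |y|) (gaussianReal μ v) := integrable_id_gaussianReal.abs
  calc ∫ y, f (posteriorMean n τ μ y) ∂gaussianReal μ v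
      ≤ ∫ y, (a + b * |μ| + b * |y|) ∂gaussianReal μ v := by
        refine integral_mono (integrable_comp_posteriorMean hf hb hfab hn hτ)
          ((integrable_const _).add (habs.const_mul b)) fun y => ?_
        nlinarith [le_abs_self (f (posteriorMean n τ μ y)), hfab (posteriorMean n τ μ y),
          abs_posteriorMean_le hn hτ μ y]
    _ = a + b * |μ| + b * ∫ y, |y| ∂gaussianReal μ v := by
        rw [integral_add (integrable_const _) (habs.const_mul b), integral_const,
          integral_const_mul, probReal_univ, one_smul]
    _ ≤ a + b * (2 * |μ| + ∫ z, |z| ∂gaussianReal 0 v) := by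
        nlinarith [integral_abs_gaussianReal_le μ v]

end Gaussian

section ValueFunction

variable {γ τ lam : ℝ}

lemma V_succ (m : ℕ) (μ n : ℝ) :
    V γ τ (m + 1) μ n lam = max (μ - lam + γ * ∫ y, V γ τ m (posteriorMean n τ μ y) (n + τ) lam
      ∂gaussianReal μ (1 / n + 1 / τ).toNNReal) 0 :=
  rfl

lemma V_nonneg (hγ1 : γ < 1) : ∀ m μ n, 0 ≤ V γ τ m μ n lam
  | 0, _, _ => div_nonneg (le_max_right _ _) (by linarith)
  | _ + 1, _, _ => le_max_right _ _

lemma measurable_V : ∀ m n, Measurable fun μ => V γ τ m μ n lam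
  | 0, _ => ((measurable_id.sub_const lam).max measurable_const).div_const _
  | m + 1, n =>
    ((measurable_id.sub_const lam).add ((measurable_integral_gaussianReal
      (f := fun μ y => V γ τ m (posteriorMean n τ μ y) (n + τ) lam)
      ((measurable_V m (n + τ)).comp (measurable_posteriorMean n τ)) _).const_mul γ)).max
    measurable_const

lemma exists_abs_V_le_linear (hγ0 : 0 ≤ γ) (hγ1 : γ < 1) (hτ : 0 < τ) :
    ∀ m n, 0 < n → ∃ a b : ℝ, 0 ≤ a ∧ 0 ≤ b ∧ ∀ μ, |V γ τ m μ n lam| ≤ a + b * |μ|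
  | 0, n, _ => by
    have h1γ : 0 < 1 - γ := by linarith
    refine ⟨|lam| / (1 - γ), 1 / (1 - γ), by positivity, by positivity, fun μ => ?_⟩
    rw [abs_of_nonneg (V_nonneg hγ1 0 μ n), V,
      show |lam| / (1 - γ) + 1 / (1 - γ) * |μ| = (|lam| + |μ|) / (1 - γ) by ring]
    gcongr
    exact max_le (by linarith [le_abs_self μ, neg_abs_le lam]) (by positivity)
  | m + 1, n, hn => by
    obtain ⟨a, b, ha, hb, hab⟩ := exists_abs_V_le_linear hγ0 hγ1 hτ m (n + τ) (add_pos hn hτ)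
    set K := ∫ z, |z| ∂gaussianReal 0 (1 / n + 1 / τ).toNNReal
    have hK : 0 ≤ K := integral_nonneg fun z => abs_nonneg z
    refine ⟨|lam| + γ * (a + b * K), 1 + 2 * γ * b, by positivity, by positivity, fun μ => ?_⟩
    have hI := integral_comp_posteriorMean_le (μ := μ) (v := (1 / n + 1 / τ).toNNReal)
      (measurable_V m (n + τ)) hb hab hn.le hτ.le
    rw [abs_of_nonneg (V_nonneg hγ1 _ μ n), V_succ]
    refine max_le ?_ (by positivity)
    nlinarith [mul_le_mul_of_nonneg_left hI hγ0, le_abs_self μ, neg_abs_le lam]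

lemma integrable_V_comp_posteriorMean (hγ0 : 0 ≤ γ) (hγ1 : γ < 1) (hτ : 0 < τ) (m : ℕ)
    {n : ℝ} (hn : 0 < n) (μ : ℝ) (v : ℝ≥0) :
    Integrable (fun y => V γ τ m (posteriorMean n τ μ y) (n + τ) lam) (gaussianReal μ v) := by
  obtain ⟨a, b, -, hb, hab⟩ := exists_abs_V_le_linear hγ0 hγ1 hτ m (n + τ) (add_pos hn hτ)
  exact integrable_comp_posteriorMean (measurable_V m (n + τ)) hb hab hn.le hτ.le

lemma sub_div_le_V (hγ0 : 0 ≤ γ) (hγ1 : γ < 1) (hτ : 0 < τ) :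
    ∀ m μ n, 0 < n → (μ - lam) / (1 - γ) ≤ V γ τ m μ n lam
  | 0, μ, _, _ => div_le_div_of_nonneg_right (le_max_left _ _) (by linarith)
  | m + 1, μ, n, hn => by
    set ν := gaussianReal μ (1 / n + 1 / τ).toNNReal
    have h1γ : 1 - γ ≠ 0 := by linarith
    have hmean : ∫ y, (posteriorMean n τ μ y - lam) / (1 - γ) ∂ν = (μ - lam) / (1 - γ) := by
      rw [integral_div, integral_sub integrable_posteriorMean_gaussianReal (integrable_const lam),
        integral_const, probReal_univ, one_smul,
        integral_posteriorMean_gaussianReal (add_pos hn hτ).ne']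
    calc (μ - lam) / (1 - γ) = μ - lam + γ * ((μ - lam) / (1 - γ)) := by field_simp; ring
      _ = μ - lam + γ * ∫ y, (posteriorMean n τ μ y - lam) / (1 - γ) ∂ν := by rw [hmean]
      _ ≤ μ - lam + γ * ∫ y, V γ τ m (posteriorMean n τ μ y) (n + τ) lam ∂ν := by
        gcongr μ - lam + γ * ?_
        exact integral_mono
          ((integrable_posteriorMean_gaussianReal.sub (integrable_const lam)).div_const _)
          (integrable_V_comp_posteriorMean hγ0 hγ1 hτ m hn μ _)
          fun y => sub_div_le_V hγ0 hγ1 hτ m _ (n + τ) (add_pos hn hτ)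
      _ ≤ V γ τ (m + 1) μ n lam := le_max_left _ _

end ValueFunction

/-- For every horizon `m`, mean `μ` and `n > 0`, the Gaussian one-armed-bandit
value satisfies `V_m(μ,n,γ,τ,λ) ≥ max(μ − λ, 0)/(1−γ)`; in particular it is
positive whenever `λ < μ`. -/
theorem nmab_value_lower_bound (γ τ lam : ℝ)
    (hγ0 : 0 ≤ γ) (hγ1 : γ < 1) (hτ : 0 < τ) :
    ∀ m : ℕ, ∀ μ n : ℝ, 0 < n →
      max (μ - lam) 0 / (1 - γ) ≤ V γ τ m μ n lam ∧
      (lam < μ → 0 < V γ τ m μ n lam) := by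
  intro m μ n hn
  have h1γ : 0 < 1 - γ := by linarith
  have hlower := sub_div_le_V (lam := lam) hγ0 hγ1 hτ m μ n hn
  refine ⟨?_, fun hlt => (div_pos (sub_pos.2 hlt) h1γ).trans_le hlower⟩
  rw [← max_div_div_right h1γ.le, zero_div]
  exact max_le hlower (V_nonneg hγ1 m μ n)
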